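/- Let A₁ = P₁ − R₁ + S₁ be a convergent double weak splitting of type I of a symmetric nonsingular matrix A₁ ∈ ℝ^{n×n}, with iteration matrix Ŵ₁ = [[P₁⁻¹R₁, −P₁⁻¹S₁],[I, 0]], and let A₂ = P₂ − R₂ + S₂ be a convergent double weak splitting of type II of a symmetric nonsingular matrix A₂ ∈ ℝ^{n×n}, with iteration matrix W̃₂ = [[(R₂P₂⁻¹)ᵀ, −(S₂P₂⁻¹)ᵀ],[I, 0]]. If (R₂P₂⁻¹)ᵀ ≤ P₁⁻¹R₁ and (P₂⁻¹)ᵀA₂ ≤ P₁⁻¹A₁, then ρ(Ŵ₁) ≤ ρ(W̃₂) < 1. -/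

import Mathlib

open Matrix Filter Topology

/-- The spectral radius of a real square matrix: the maximum (supremum) of the
moduli of its complex eigenvalues. -/
noncomputable def specRad {n : Type*} [Fintype n] [DecidableEq n]
    (B : Matrix n n ℝ) : ℝ :=
  sSup ((fun z : ℂ => ‖z‖) '' spectrum ℂ (B.map Complex.ofReal))

/-- Entrywise order on real matrices: `entryLE A B` means every entry of `A` is
at most the corresponding entry of `B`. -/
def entryLE {m n : Type*} (A B : Matrix m n ℝ) : Prop :=
  ∀ i j, A i j ≤ B i j

/-- `X` is the Moore–Penrose inverse of `A`. -/
def IsMoorePenrose {m n : Type*} [Fintype m] [Fintype n]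
    (A : Matrix m n ℝ) (X : Matrix n m ℝ) : Prop :=
  A * X * A = A ∧ X * A * X = X ∧ (A * X)ᵀ = A * X ∧ (X * A)ᵀ = X * A

/-- Iteration matrix of a double weak splitting of type II:
`W̃ = [[(RP⁻¹)ᵀ, −(SP⁻¹)ᵀ],[I, 0]]`. -/
noncomputable def itMatII {n : Type*} [Fintype n] [DecidableEq n]
    (P R S : Matrix n n ℝ) : Matrix (n ⊕ n) (n ⊕ n) ℝ :=
  Matrix.fromBlocks ((R * P⁻¹)ᵀ) (-((S * P⁻¹)ᵀ)) 1 0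

/-- Iteration matrix of a double weak splitting of type I:
`Ŵ = [[P⁻¹R, −P⁻¹S],[I, 0]]`. -/
noncomputable def itMatI {n : Type*} [Fintype n] [DecidableEq n]
    (P R S : Matrix n n ℝ) : Matrix (n ⊕ n) (n ⊕ n) ℝ :=
  Matrix.fromBlocks (P⁻¹ * R) (-(P⁻¹ * S)) 1 0

/-!
Let `s = ρ(Ŵ₁) > 0` be attained at an eigenvalue `μ` of `Ŵ₁ = [[M, K], [I, 0]]` with eigenvector
`(v₁, v₂)`. The companion shape gives `v₁ = μ v₂` and `(μ M + K) v₂ = μ² v₂`, so `u = |v₂|`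
satisfies `s² u ≤ (s M + K) u` when `M, K ≥ 0`. If `W̃₂ = [[M', K'], [I, 0]]` with `M' ≤ M` and
`M + K ≤ M' + K'`, then `s ≤ 1` gives `s M + K ≤ s M' + K'`, so the nonnegative vector
`w = (s u, u)` satisfies `s w ≤ W̃₂ w`. For a nonnegative matrix this forces `s ≤ ρ(W̃₂)`
(the Collatz–Wielandt bound), which follows from `sᵏ w ≤ W̃₂ᵏ w` and Gelfand's formula.
-/

section SpectralRadius

variable {m : Type*} [Fintype m] [DecidableEq m]

lemma specRad_nonneg (B : Matrix m m ℝ) : 0 ≤ specRad B :=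
  Real.sSup_nonneg fun _ ⟨z, _, hz⟩ => hz ▸ norm_nonneg z

lemma norm_le_specRad {B : Matrix m m ℝ} {μ : ℂ} (hμ : μ ∈ spectrum ℂ (B.map Complex.ofReal)) :
    ‖μ‖ ≤ specRad B :=
  le_csSup ((B.map Complex.ofReal).finite_spectrum.image _).bddAbove ⟨μ, hμ, rfl⟩

lemma exists_norm_eq_specRad {B : Matrix m m ℝ} (hB : 0 < specRad B) :
    ∃ μ ∈ spectrum ℂ (B.map Complex.ofReal), ‖μ‖ = specRad B := by
  have hne : ((fun z : ℂ => ‖z‖) '' spectrum ℂ (B.map Complex.ofReal)).Nonempty := by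
    by_contra h
    simp [specRad, Set.not_nonempty_iff_eq_empty.1 h] at hB
  exact hne.csSup_mem ((B.map Complex.ofReal).finite_spectrum.image _)

lemma spectralRadius_le_ofReal_specRad (B : Matrix m m ℝ) :
    spectralRadius ℂ (B.map Complex.ofReal) ≤ ENNReal.ofReal (specRad B) :=
  iSup₂_le fun μ hμ => by
    rw [← enorm_eq_nnnorm, ← ofReal_norm]
    exact ENNReal.ofReal_le_ofReal (norm_le_specRad hμ)

end SpectralRadius

lemma exists_mulVec_eq_smul_of_mem_spectrum {m K : Type*} [Fintype m] [DecidableEq m] [Field K]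
    {M : Matrix m m K} {μ : K} (hμ : μ ∈ spectrum K M) : ∃ v ≠ 0, M *ᵥ v = μ • v := by
  rw [← Matrix.spectrum_toLin', ← Module.End.hasEigenvalue_iff_mem_spectrum] at hμ
  obtain ⟨v, hv, hv0⟩ := hμ.exists_hasEigenvector
  exact ⟨v, hv0, by simpa [Module.End.mem_eigenspace_iff] using hv⟩

lemma ofReal_le_spectralRadius_of_le_norm_pow {A : Type*} [NormedRing A] [NormedAlgebra ℂ A]
    [CompleteSpace A] (a : A) {c s : ℝ} (hc : 0 < c) (hs : 0 ≤ s)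
    (h : ∀ k : ℕ, c * s ^ k ≤ ‖a ^ k‖) :
    ENNReal.ofReal s ≤ spectralRadius ℂ a := by
  have hlim : Tendsto (fun k : ℕ => ENNReal.ofReal (c ^ (1 / (k : ℝ)) * s)) atTop
      (𝓝 (ENNReal.ofReal s)) := by
    refine ENNReal.tendsto_ofReal ?_
    simpa using ((Real.continuousAt_const_rpow hc.ne').tendsto.comp
      tendsto_one_div_atTop_nhds_zero_nat).mul_const s
  refine le_of_tendsto_of_tendsto hlim
    (spectrum.pow_norm_pow_one_div_tendsto_nhds_spectralRadius a) ?_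
  filter_upwards [eventually_ge_atTop 1] with k hk
  refine ENNReal.ofReal_le_ofReal ?_
  calc c ^ (1 / (k : ℝ)) * s = (c * s ^ k) ^ (1 / (k : ℝ)) := by
        rw [Real.mul_rpow hc.le (by positivity), ← Real.rpow_natCast, ← Real.rpow_mul hs,
          mul_one_div_cancel (by positivity), Real.rpow_one]
    _ ≤ ‖a ^ k‖ ^ (1 / (k : ℝ)) := Real.rpow_le_rpow (by positivity) (h k) (by positivity)

section Nonnegative

lemma mulVec_le_mulVec_of_nonneg {l m : Type*} [Fintype m] {B : Matrix l m ℝ} (hB : entryLE 0 B)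
    {u v : m → ℝ} (huv : u ≤ v) : B *ᵥ u ≤ B *ᵥ v := fun i =>
  Finset.sum_le_sum fun j _ => mul_le_mul_of_nonneg_left (huv j) (hB i j)

lemma mulVec_le_mulVec_of_entryLE {l m : Type*} [Fintype m] {B C : Matrix l m ℝ}
    (hBC : entryLE B C) {u : m → ℝ} (hu : 0 ≤ u) : B *ᵥ u ≤ C *ᵥ u := fun i =>
  Finset.sum_le_sum fun j _ => mul_le_mul_of_nonneg_right (hBC i j) (hu j)

variable {m : Type*} [Fintype m] [DecidableEq m]

lemma entryLE_zero_pow {B : Matrix m m ℝ} (hB : entryLE 0 B) (k : ℕ) : entryLE 0 (B ^ k) := by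
  induction k with
  | zero => intro i j; by_cases h : i = j <;> simp [one_apply, h]
  | succ k ih =>
    intro i j
    rw [pow_succ, mul_apply]
    exact Finset.sum_nonneg fun l _ => mul_nonneg (ih i l) (hB l j)

lemma pow_smul_le_pow_mulVec {B : Matrix m m ℝ} (hB : entryLE 0 B) {u : m → ℝ} {s : ℝ}
    (hs : 0 ≤ s) (hsu : s • u ≤ B *ᵥ u) (k : ℕ) : s ^ k • u ≤ B ^ k *ᵥ u := by
  induction k with
  | zero => simp
  | succ k ih =>
    calc s ^ (k + 1) • u = s • s ^ k • u := by rw [pow_succ', mul_smul]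
      _ ≤ s • (B ^ k *ᵥ u) := smul_le_smul_of_nonneg_left ih hs
      _ = B ^ k *ᵥ (s • u) := (mulVec_smul _ _ _).symm
      _ ≤ B ^ k *ᵥ (B *ᵥ u) := mulVec_le_mulVec_of_nonneg (entryLE_zero_pow hB k) hsu
      _ = B ^ (k + 1) *ᵥ u := by rw [mulVec_mulVec, pow_succ]

attribute [local instance] Matrix.linftyOpNormedRing Matrix.linftyOpNormedAlgebra in
theorem le_specRad_of_smul_le_mulVec {B : Matrix m m ℝ} (hB : entryLE 0 B) {u : m → ℝ}
    (hu : 0 ≤ u) (hu0 : u ≠ 0) {s : ℝ} (hsu : s • u ≤ B *ᵥ u) : s ≤ specRad B := by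
  rcases lt_or_ge s 0 with hs | hs
  · exact hs.le.trans (specRad_nonneg B)
  obtain ⟨i, hi⟩ := Function.ne_iff.mp hu0
  have hui : 0 < u i := (hu i).lt_of_ne' hi
  set uc : m → ℂ := fun j => (u j : ℂ)
  have huc : 0 < ‖uc‖ := hui.trans_le <| by
    simpa [uc, abs_of_pos hui] using norm_le_pi_norm uc i
  have hnorm_pow (k : ℕ) : u i / ‖uc‖ * s ^ k ≤ ‖B.map Complex.ofReal ^ k‖ := by
    rw [div_mul_eq_mul_div, div_le_iff₀ huc]
    calc u i * s ^ k = (s ^ k • u) i := by simp [mul_comm]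
      _ ≤ (B ^ k *ᵥ u) i := pow_smul_le_pow_mulVec hB hs hsu k i
      _ ≤ ‖(((B ^ k *ᵥ u) i : ℝ) : ℂ)‖ := by
        rw [Complex.norm_real, Real.norm_eq_abs]; exact le_abs_self _
      _ = ‖(B.map Complex.ofReal ^ k *ᵥ uc) i‖ := by
        congr 1
        exact (RingHom.map_mulVec Complex.ofRealHom _ u i).trans (by rw [Matrix.map_pow]; rfl)
      _ ≤ ‖B.map Complex.ofReal ^ k *ᵥ uc‖ := norm_le_pi_norm _ i
      _ ≤ ‖B.map Complex.ofReal ^ k‖ * ‖uc‖ := linfty_opNorm_mulVec _ _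
  have hgelfand := ofReal_le_spectralRadius_of_le_norm_pow _ (div_pos hui huc) hs hnorm_pow
  exact (ENNReal.ofReal_le_ofReal_iff (specRad_nonneg B)).1
    (hgelfand.trans (spectralRadius_le_ofReal_specRad B))

end Nonnegative

lemma norm_mulVec_le_mulVec_norm {l m α : Type*} [Fintype m] [SeminormedRing α]
    {C : Matrix l m α} {D : Matrix l m ℝ} (hCD : ∀ i j, ‖C i j‖ ≤ D i j) (x : m → α) (i : l) :
    ‖(C *ᵥ x) i‖ ≤ (D *ᵥ fun j => ‖x j‖) i :=
  (norm_sum_le _ _).trans <| Finset.sum_le_sum fun j _ =>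
    (norm_mul_le _ _).trans (mul_le_mul_of_nonneg_right (hCD i j) (norm_nonneg _))

lemma entryLE_zero_fromBlocks_one_zero {m : Type*} [DecidableEq m] {M K : Matrix m m ℝ}
    (hM : entryLE 0 M) (hK : entryLE 0 K) : entryLE 0 (fromBlocks M K (1 : Matrix m m ℝ) 0) := by
  rintro (i | i) (j | j)
  · exact hM i j
  · exact hK i j
  · by_cases h : i = j <;> simp [one_apply, h]
  · simp

section Companion

variable {m : Type*} [Fintype m] [DecidableEq m]

lemma fromBlocks_one_zero_eigen {R : Type*} [CommRing R] {M K : Matrix m m R} {μ : R}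
    {v₁ v₂ : m → R} (hv : fromBlocks M K 1 0 *ᵥ Sum.elim v₁ v₂ = μ • Sum.elim v₁ v₂) :
    v₁ = μ • v₂ ∧ (μ • M + K) *ᵥ v₂ = μ ^ 2 • v₂ := by
  rw [fromBlocks_mulVec, Sum.elim_comp_inl, Sum.elim_comp_inr] at hv
  have hv₁ : v₁ = μ • v₂ := funext fun i => by simpa using congrFun hv (Sum.inr i)
  refine ⟨hv₁, funext fun i => ?_⟩
  have hrow := congrFun hv (Sum.inl i)
  simp only [Sum.elim_inl, Pi.add_apply, Pi.smul_apply, smul_eq_mul] at hrow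
  simp only [add_mulVec, smul_mulVec, Pi.add_apply, Pi.smul_apply, smul_eq_mul]
  rw [hv₁] at hrow
  simp only [mulVec_smul, Pi.smul_apply, smul_eq_mul] at hrow
  linear_combination hrow

theorem specRad_fromBlocks_one_zero_le {M K M' K' : Matrix m m ℝ} (hM : entryLE 0 M)
    (hK : entryLE 0 K) (hM' : entryLE 0 M') (hK' : entryLE 0 K') (hMM' : entryLE M' M)
    (hsum : entryLE (M + K) (M' + K')) (h1 : specRad (fromBlocks M K 1 0) ≤ 1) :
    specRad (fromBlocks M K 1 0) ≤ specRad (fromBlocks M' K' 1 0) := by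
  rcases (specRad_nonneg (fromBlocks M K 1 0)).eq_or_lt with hs | hs
  · rw [← hs]; exact specRad_nonneg _
  obtain ⟨μ, hμ, hμs⟩ := exists_norm_eq_specRad hs
  obtain ⟨v, hv0, hv⟩ := exists_mulVec_eq_smul_of_mem_spectrum hμ
  obtain ⟨v₁, x, rfl⟩ : ∃ v₁ x, v = Sum.elim v₁ x := ⟨_, _, (Sum.elim_comp_inl_inr v).symm⟩
  rw [← hμs] at h1 ⊢
  rw [fromBlocks_map, Matrix.map_one _ Complex.ofReal_zero Complex.ofReal_one,
    Matrix.map_zero _ Complex.ofReal_zero] at hv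
  obtain ⟨hv₁, hquad⟩ := fromBlocks_one_zero_eigen hv
  have hx0 : x ≠ 0 := by
    rintro rfl
    exact hv0 (by rw [hv₁, smul_zero, Sum.elim_zero_zero])
  set u : m → ℝ := fun j => ‖x j‖
  have hu : 0 ≤ u := fun j => norm_nonneg _
  have hu0 : u ≠ 0 := fun h => hx0 (funext fun j => norm_eq_zero.1 (congrFun h j))
  have hentry (i j : m) :
      ‖(μ • M.map Complex.ofReal + K.map Complex.ofReal) i j‖ ≤ (‖μ‖ • M + K) i j := by
    simp only [Matrix.add_apply, Matrix.smul_apply, Matrix.map_apply, smul_eq_mul]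
    refine (norm_add_le _ _).trans_eq ?_
    rw [norm_mul, Complex.norm_real, Complex.norm_real, Real.norm_of_nonneg (hM i j),
      Real.norm_of_nonneg (hK i j)]
  have hsq : ‖μ‖ ^ 2 • u ≤ (‖μ‖ • M + K) *ᵥ u := fun i => by
    calc (‖μ‖ ^ 2 • u) i = ‖(μ ^ 2 • x) i‖ := by simp [u]
      _ = ‖((μ • M.map Complex.ofReal + K.map Complex.ofReal) *ᵥ x) i‖ := by rw [hquad]
      _ ≤ ((‖μ‖ • M + K) *ᵥ u) i := norm_mulVec_le_mulVec_norm hentry x i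
  have hcmp : entryLE (‖μ‖ • M + K) (‖μ‖ • M' + K') := fun i j => by
    have hsumij := hsum i j
    have := mul_le_mul_of_nonneg_left (hMM' i j) (sub_nonneg.2 h1)
    simp only [Matrix.add_apply, Matrix.smul_apply, smul_eq_mul] at hsumij ⊢
    linarith
  refine le_specRad_of_smul_le_mulVec (entryLE_zero_fromBlocks_one_zero hM' hK')
    (u := Sum.elim (‖μ‖ • u) u) ?_ ?_ ?_
  · rintro (i | i)
    exacts [mul_nonneg (norm_nonneg _) (hu i), hu i]
  · exact fun h => hu0 (by simpa using congrArg (· ∘ Sum.inr) h)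
  · rw [fromBlocks_mulVec, Sum.elim_comp_inl, Sum.elim_comp_inr]
    rintro (i | i)
    · calc (‖μ‖ • Sum.elim (‖μ‖ • u) u) (Sum.inl i) = (‖μ‖ ^ 2 • u) i := by
            simp [pow_two, mul_assoc]
        _ ≤ ((‖μ‖ • M + K) *ᵥ u) i := hsq i
        _ ≤ ((‖μ‖ • M' + K') *ᵥ u) i := mulVec_le_mulVec_of_entryLE hcmp hu i
        _ = (M' *ᵥ (‖μ‖ • u) + K' *ᵥ u) i := by simp [add_mulVec, smul_mulVec, mulVec_smul]
    · simp

end Companion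

theorem stmt15_general {n : ℕ} (A₁ P₁ R₁ S₁ A₂ P₂ R₂ S₂ : Matrix (Fin n) (Fin n) ℝ)
    (hAsym₂ : A₂ᵀ = A₂)
    -- `A₁ = P₁ − R₁ + S₁` is a double weak splitting of type I
    (hsplit₁ : A₁ = P₁ - R₁ + S₁) (hPinv₁ : IsUnit P₁.det)
    (hRP₁ : entryLE 0 (P₁⁻¹ * R₁)) (hSP₁ : entryLE 0 (-(P₁⁻¹ * S₁)))
    -- `A₂ = P₂ − R₂ + S₂` is a double weak splitting of type II
    (hsplit₂ : A₂ = P₂ - R₂ + S₂) (hPinv₂ : IsUnit P₂.det)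
    (hRP₂ : entryLE 0 (R₂ * P₂⁻¹)) (hSP₂ : entryLE 0 (-(S₂ * P₂⁻¹)))
    -- both splittings are convergent
    (hconv₁ : specRad (itMatI P₁ R₁ S₁) < 1)
    (hconv₂ : specRad (itMatII P₂ R₂ S₂) < 1)
    -- `(R₂P₂⁻¹)ᵀ ≤ P₁⁻¹R₁` and `(P₂⁻¹)ᵀA₂ ≤ P₁⁻¹A₁`
    (hR : entryLE ((R₂ * P₂⁻¹)ᵀ) (P₁⁻¹ * R₁))
    (hAP : entryLE ((P₂⁻¹)ᵀ * A₂) (P₁⁻¹ * A₁)) :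
    specRad (itMatI P₁ R₁ S₁) ≤ specRad (itMatII P₂ R₂ S₂) ∧
      specRad (itMatII P₂ R₂ S₂) < 1 := by
  have hA₁ : P₁⁻¹ * A₁ = 1 - P₁⁻¹ * R₁ - -(P₁⁻¹ * S₁) := by
    rw [hsplit₁, mul_add, mul_sub, nonsing_inv_mul _ hPinv₁, sub_neg_eq_add]
  -- the symmetry of `A₂` turns the right splitting of `A₂` into a left one of `(P₂⁻¹)ᵀ A₂`
  have hA₂ : (P₂⁻¹)ᵀ * A₂ = 1 - (R₂ * P₂⁻¹)ᵀ - -(S₂ * P₂⁻¹)ᵀ := by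
    rw [← hAsym₂, ← transpose_mul, hsplit₂, add_mul, sub_mul, mul_nonsing_inv _ hPinv₂,
      transpose_add, transpose_sub, transpose_one, sub_neg_eq_add]
  have hsum : entryLE (P₁⁻¹ * R₁ + -(P₁⁻¹ * S₁)) ((R₂ * P₂⁻¹)ᵀ + -(S₂ * P₂⁻¹)ᵀ) :=
    fun i j => by
      have hij := hAP i j
      rw [hA₁, hA₂] at hij
      simp only [Matrix.sub_apply, Matrix.add_apply] at hij ⊢
      linarith
  exact ⟨specRad_fromBlocks_one_zero_le hRP₁ hSP₁ (fun i j => hRP₂ j i) (fun i j => hSP₂ j i)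
    hR hsum hconv₁.le, hconv₂⟩

theorem stmt15 {n : ℕ} (A₁ P₁ R₁ S₁ A₂ P₂ R₂ S₂ : Matrix (Fin n) (Fin n) ℝ)
    (hAsym₁ : A₁ᵀ = A₁) (hAinv₁ : IsUnit A₁.det)
    (hAsym₂ : A₂ᵀ = A₂) (hAinv₂ : IsUnit A₂.det)
    -- `A₁ = P₁ − R₁ + S₁` is a double weak splitting of type I
    (hsplit₁ : A₁ = P₁ - R₁ + S₁) (hPinv₁ : IsUnit P₁.det)
    (hRP₁ : entryLE 0 (P₁⁻¹ * R₁)) (hSP₁ : entryLE 0 (-(P₁⁻¹ * S₁)))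
    -- `A₂ = P₂ − R₂ + S₂` is a double weak splitting of type II
    (hsplit₂ : A₂ = P₂ - R₂ + S₂) (hPinv₂ : IsUnit P₂.det)
    (hRP₂ : entryLE 0 (R₂ * P₂⁻¹)) (hSP₂ : entryLE 0 (-(S₂ * P₂⁻¹)))
    -- both splittings are convergent
    (hconv₁ : specRad (itMatI P₁ R₁ S₁) < 1)
    (hconv₂ : specRad (itMatII P₂ R₂ S₂) < 1)
    -- `(R₂P₂⁻¹)ᵀ ≤ P₁⁻¹R₁` and `(P₂⁻¹)ᵀA₂ ≤ P₁⁻¹A₁`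
    (hR : entryLE ((R₂ * P₂⁻¹)ᵀ) (P₁⁻¹ * R₁))
    (hAP : entryLE ((P₂⁻¹)ᵀ * A₂) (P₁⁻¹ * A₁)) :
    specRad (itMatI P₁ R₁ S₁) ≤ specRad (itMatII P₂ R₂ S₂) ∧
      specRad (itMatII P₂ R₂ S₂) < 1 :=
  stmt15_general A₁ P₁ R₁ S₁ A₂ P₂ R₂ S₂ hAsym₂ hsplit₁ hPinv₁ hRP₁ hSP₁ hsplit₂ hPinv₂ hRP₂ hSP₂
    hconv₁ hconv₂ hR hAP
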